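/- Let (q₀,q₁) be a pair of quadratic forms in Kronecker normal form on a (2m+1)-dimensional space over a field k of characteristic 2, with half-discriminant coefficients a₀,…,a_n and parameters r₀,…,r_{n-2} (n = 2m+1). Let g be the automorphism of the associated bilinear pair given by parameters s₀,…,s_{n-2}. Then the transformed pair (q₀∘g, q₁∘g) is again in normal form with parameters r'_i, where (identifying r = Σ r_i d_i, s = Σ s_i d_i, r' = Σ r'_i d_i in A = k[T]/(f)) one has r' ≡ r + s² + s mod k. -/

import Mathlib

open Polynomial Finset

/-- The quadratic form `q₀ = ∑ a_{2i} xᵢ² + ∑ x_{i+1} yᵢ + ∑ r_{2i+1} yᵢ²` of a pair in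
Kronecker normal form. -/
def nfQ0 (k : Type*) [Field k] (m : ℕ) (a r : ℕ → k)
    (z : (Fin (m + 1) → k) × (Fin m → k)) : k :=
  (∑ i : Fin (m + 1), a (2 * i) * (z.1 i) ^ 2)
    + (∑ i : Fin m, z.1 i.succ * z.2 i)
    + (∑ i : Fin m, r (2 * i + 1) * (z.2 i) ^ 2)

/-- The quadratic form `q₁ = ∑ a_{2i+1} xᵢ² + ∑ xᵢ yᵢ + ∑ r_{2i} yᵢ²` of a pair in
Kronecker normal form. -/
def nfQ1 (k : Type*) [Field k] (m : ℕ) (a r : ℕ → k)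
    (z : (Fin (m + 1) → k) × (Fin m → k)) : k :=
  (∑ i : Fin (m + 1), a (2 * i + 1) * (z.1 i) ^ 2)
    + (∑ i : Fin m, z.1 i.castSucc * z.2 i)
    + (∑ i : Fin m, r (2 * i) * (z.2 i) ^ 2)

/-- The automorphism `g` of the associated pair of bilinear forms determined by the
parameters `s`: `g(wᵢ) = wᵢ`, `g(vᵢ) = vᵢ + ∑ₖ s_{i+k} wₖ`; in coordinates
`g(x, y) = (x' , y)` with `x'ₖ = xₖ + ∑ᵢ s_{i+k} yᵢ`. -/
def nfG (k : Type*) [Field k] (m : ℕ) (s : ℕ → k)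
    (z : (Fin (m + 1) → k) × (Fin m → k)) : (Fin (m + 1) → k) × (Fin m → k) :=
  (fun κ => z.1 κ + ∑ i : Fin m, s ((i : ℕ) + (κ : ℕ)) * z.2 i, z.2)

/-- The half-discriminant polynomial `f(T) = ∑ aᵢ Tⁱ` of degree `n = 2m + 1`. -/
noncomputable def nfF (k : Type*) [Field k] (m : ℕ) (a : ℕ → k) : k[X] :=
  ∑ i ∈ range (2 * m + 2), C (a i) * X ^ i

/-- The basis element `dᵢ = a_{i+1} + a_{i+2} t + ⋯ + aₙ t^{n-1-i}` of
`A = k[T]/(f)`. -/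
noncomputable def nfD (k : Type*) [Field k] (m : ℕ) (a : ℕ → k) (i : ℕ) :
    k[X] ⧸ Ideal.span {nfF k m a} :=
  Ideal.Quotient.mk (Ideal.span {nfF k m a})
    (∑ j ∈ range (2 * m + 1 - i), C (a (i + 1 + j)) * X ^ j)

/-!
In characteristic 2 squaring is additive. Substituting `g` into `qᵢ` therefore only changes the
coefficients of the `yᵢ²`: `(x_κ + ∑ s_{i+κ} yᵢ)² = x_κ² + ∑ s_{i+κ}² yᵢ²`, and the symmetric
cross term `∑ s_{i+j} yᵢ yⱼ` collapses to its diagonal. So `r' = r + s + c(s)` for an explicit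
quadratic `c`.

In `A`, `dᵢ` is the class of `D_{i+1}`, where `D_n = divX^[n] f`. From `D_n = X D_{n+1} + aₙ` one
gets by telescoping `D_{i+1}² = f D_{2i+2} + ∑_{j ≤ 2i+1} a_{2i+1-j} D_{j+1}`, so
`s² = ∑ sᵢ² dᵢ²` has the coordinates `c_j` in the family `(d_j)`. For `j ≥ 2m` the polynomial
`D_{j+1}` is a constant, which produces the constant term.
-/

namespace Polynomial

variable {R : Type*} [CommRing R]

theorem coeff_divX_iterate (p : R[X]) (n j : ℕ) : (divX^[n] p).coeff j = p.coeff (n + j) := by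
  induction n generalizing j with
  | zero => simp
  | succ n ih => rw [Function.iterate_succ_apply', coeff_divX, ih, add_comm j 1, add_assoc]

theorem divX_iterate_succ_mul_X_add (p : R[X]) (n : ℕ) :
    divX^[n + 1] p * X + C (p.coeff n) = divX^[n] p := by
  rw [Function.iterate_succ_apply', ← add_zero n, ← coeff_divX_iterate, add_zero]
  exact divX_mul_X_add _

theorem divX_iterate_eq_C_coeff {p : R[X]} {n : ℕ} (h : p.natDegree ≤ n) :
    divX^[n] p = C (p.coeff n) := by
  ext j
  rw [coeff_divX_iterate, coeff_C]
  rcases j with _ | j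
  · simp
  · exact coeff_eq_zero_of_natDegree_lt (by omega)

theorem mul_divX_iterate_add_sub_mul (p : R[X]) (j n : ℕ) :
    p * divX^[j + n] p - divX^[j] p * divX^[n] p =
      ∑ a ∈ range j, (C (p.coeff a) * divX^[j + n - a] p
        - C (p.coeff (j + n - 1 - a)) * divX^[a + 1] p) := by
  induction j generalizing n with
  | zero => simp
  | succ j ih =>
    have step : divX^[j] p * divX^[n + 1] p - divX^[j + 1] p * divX^[n] p =
        C (p.coeff j) * divX^[n + 1] p - C (p.coeff n) * divX^[j + 1] p := by
      linear_combination divX^[n + 1] p * (divX_iterate_succ_mul_X_add p j).symm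
        - divX^[j + 1] p * (divX_iterate_succ_mul_X_add p n).symm
    rw [show j + 1 + n = j + (n + 1) by omega, sum_range_succ, ← ih (n + 1),
      show j + (n + 1) - j = n + 1 by omega, show j + (n + 1) - 1 - j = n by omega]
    linear_combination step

theorem divX_iterate_sq [CharP R 2] (p : R[X]) (i : ℕ) :
    (divX^[i + 1] p) ^ 2 = p * divX^[2 * i + 2] p
      + ∑ j ∈ range (2 * i + 2), C (p.coeff (2 * i + 1 - j)) * divX^[j + 1] p := by
  have h := mul_divX_iterate_add_sub_mul p (i + 1) (i + 1)
  rw [show i + 1 + (i + 1) = 2 * i + 2 by omega, sum_sub_distrib] at h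
  have hsplit : ∑ j ∈ range (2 * i + 2), C (p.coeff (2 * i + 1 - j)) * divX^[j + 1] p
      = ∑ a ∈ range (i + 1), C (p.coeff (2 * i + 2 - 1 - a)) * divX^[a + 1] p
        + ∑ a ∈ range (i + 1), C (p.coeff a) * divX^[2 * i + 2 - a] p := by
    rw [show 2 * i + 2 = (i + 1) + (i + 1) by omega, sum_range_add,
      ← sum_range_reflect (fun a => C (p.coeff a) * divX^[i + 1 + (i + 1) - a] p)]
    congr 1 <;> refine sum_congr rfl fun a ha => ?_
    · rw [show i + 1 + (i + 1) - 1 - a = 2 * i + 1 - a by omega]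
    · rw [mem_range] at ha
      rw [show 2 * i + 1 - (i + 1 + a) = i + 1 - 1 - a by omega,
        show i + 1 + a + 1 = i + 1 + (i + 1) - (i + 1 - 1 - a) by omega]
  rw [hsplit]
  linear_combination -h - (∑ a ∈ range (i + 1), C (p.coeff a) * divX^[2 * i + 2 - a] p)
    * CharTwo.two_eq_zero (R := R[X])

theorem smul_mk_eq_mk_C_mul (I : Ideal R[X]) (c : R) (q : R[X]) :
    c • Ideal.Quotient.mk I q = Ideal.Quotient.mk I (C c * q) := by
  rw [← smul_eq_C_mul]
  exact (map_smul (Ideal.Quotient.mkₐ R I) c q).symm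

def squareCoeff (p : R[X]) (n : ℕ) (s : ℕ → R) (j : ℕ) : R :=
  ∑ i ∈ range n with j ≤ 2 * i + 1, p.coeff (2 * i + 1 - j) * s i ^ 2

theorem sq_sum_C_mul_divX_iterate [CharP R 2] (p : R[X]) (n : ℕ) (s : ℕ → R) :
    (∑ i ∈ range n, C (s i) * divX^[i + 1] p) ^ 2
      = p * ∑ i ∈ range n, C (s i ^ 2) * divX^[2 * i + 2] p
        + ∑ j ∈ range (2 * n), C (squareCoeff p n s j) * divX^[j + 1] p := by
  have hswap : ∑ i ∈ range n, ∑ j ∈ range (2 * i + 2),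
        C (s i ^ 2) * (C (p.coeff (2 * i + 1 - j)) * divX^[j + 1] p)
      = ∑ j ∈ range (2 * n), ∑ i ∈ range n with j ≤ 2 * i + 1,
        C (s i ^ 2) * (C (p.coeff (2 * i + 1 - j)) * divX^[j + 1] p) :=
    sum_comm' fun i j => by simp only [mem_range, mem_filter]; omega
  calc (∑ i ∈ range n, C (s i) * divX^[i + 1] p) ^ 2
      = ∑ i ∈ range n, C (s i ^ 2) * (divX^[i + 1] p) ^ 2 := by
        simp only [sum_pow_char, mul_pow, C_pow]
    _ = p * ∑ i ∈ range n, C (s i ^ 2) * divX^[2 * i + 2] p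
        + ∑ i ∈ range n, ∑ j ∈ range (2 * i + 2),
          C (s i ^ 2) * (C (p.coeff (2 * i + 1 - j)) * divX^[j + 1] p) := by
        simp only [divX_iterate_sq, mul_add, sum_add_distrib, mul_sum, mul_left_comm]
    _ = _ := by
        rw [hswap]
        congr 1
        refine sum_congr rfl fun j _ => ?_
        rw [squareCoeff, map_sum, sum_mul]
        refine sum_congr rfl fun i _ => ?_
        rw [C_mul, C_pow]
        ring

end Polynomial

theorem CharTwo.sum_sum_eq_sum_of_symm {ι R : Type*} [CommRing R] [CharP R 2] (s : Finset ι)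
    (g : ι → ι → R) (hg : ∀ i j, g i j = g j i) :
    ∑ i ∈ s, ∑ j ∈ s, g i j = ∑ i ∈ s, g i i := by
  classical
  induction s using Finset.induction_on with
  | empty => simp
  | insert a s ha ih =>
    simp only [sum_insert ha, sum_add_distrib, ih]
    rw [sum_congr rfl fun i _ => hg i a]
    linear_combination (∑ j ∈ s, g a j) * CharTwo.two_eq_zero (R := R)

/-- `nfQ0` and `nfQ1` are the cases `ι = Fin.succ` and `ι = Fin.castSucc`. -/
def kroneckerForm {R : Type*} [CommRing R] {m : ℕ} (b : Fin (m + 1) → R)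
    (ι : Fin m → Fin (m + 1)) (ρ : Fin m → R) (z : (Fin (m + 1) → R) × (Fin m → R)) : R :=
  (∑ i, b i * z.1 i ^ 2) + (∑ i, z.1 (ι i) * z.2 i) + ∑ i, ρ i * z.2 i ^ 2

section NormalForm

variable {k : Type*} [Field k]

theorem kroneckerForm_nfG [CharP k 2] {m e : ℕ} (b : Fin (m + 1) → k) (ι : Fin m → Fin (m + 1))
    (hι : ∀ i, (ι i : ℕ) = i + e) (ρ : Fin m → k) (s : ℕ → k)
    (z : (Fin (m + 1) → k) × (Fin m → k)) :
    kroneckerForm b ι ρ (nfG k m s z) = kroneckerForm b ι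
      (fun i => ρ i + s (2 * i + e) + ∑ κ : Fin (m + 1), b κ * s (i + κ) ^ 2) z := by
  obtain ⟨x, y⟩ := z
  have hsq : ∀ κ, b κ * (x κ + ∑ i : Fin m, s (i + κ) * y i) ^ 2
      = b κ * x κ ^ 2 + ∑ i : Fin m, b κ * s (i + κ) ^ 2 * y i ^ 2 := fun κ => by
    simp only [add_pow_char, sum_pow_char, mul_pow, mul_add, mul_sum, mul_assoc]
  have hcross : ∑ i : Fin m, (x (ι i) + ∑ j : Fin m, s (j + ι i) * y j) * y i
      = ∑ i, x (ι i) * y i + ∑ i : Fin m, s (2 * i + e) * y i ^ 2 := by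
    simp only [add_mul, sum_add_distrib, sum_mul, hι]
    congr 1
    rw [CharTwo.sum_sum_eq_sum_of_symm _ (fun i j : Fin m => s (j + (i + e)) * y j * y i)]
    · exact sum_congr rfl fun i _ => by ring_nf
    · intro i j; ring_nf
  simp only [kroneckerForm, nfG, hsq, sum_add_distrib]
  rw [hcross]
  simp only [add_mul, sum_add_distrib, sum_mul]
  rw [sum_comm (s := univ) (t := univ)
    (f := fun (κ : Fin (m + 1)) (i : Fin m) => b κ * s (i + κ) ^ 2 * y i ^ 2)]
  ring

variable (m : ℕ) (a : ℕ → k)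

theorem coeff_nfF (l : ℕ) : (nfF k m a).coeff l = if l < 2 * m + 2 then a l else 0 := by
  simp only [nfF, finsetSum_coeff, coeff_C_mul_X_pow, sum_ite_eq, mem_range]

theorem natDegree_nfF_le : (nfF k m a).natDegree ≤ 2 * m + 1 :=
  natDegree_le_iff_coeff_eq_zero.2 fun l hl => by
    rw [coeff_nfF, if_neg (by omega)]

theorem nfD_eq_mk_divX_iterate (i : ℕ) :
    nfD k m a i = Ideal.Quotient.mk _ (divX^[i + 1] (nfF k m a)) := by
  rw [nfD]
  congr 1
  ext l
  simp only [finsetSum_coeff, coeff_C_mul_X_pow, sum_ite_eq, mem_range, coeff_divX_iterate,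
    coeff_nfF, show l < 2 * m + 1 - i ↔ i + 1 + l < 2 * m + 2 by omega]

theorem sum_smul_nfD (c : ℕ → k) :
    ∑ i ∈ range (2 * m), c i • nfD k m a i
      = Ideal.Quotient.mk _ (∑ i ∈ range (2 * m), C (c i) * divX^[i + 1] (nfF k m a)) := by
  simp only [nfD_eq_mk_divX_iterate, map_sum, smul_mk_eq_mk_C_mul]

theorem sq_sum_smul_nfD [CharP k 2] (s : ℕ → k) :
    (∑ i ∈ range (2 * m), s i • nfD k m a i) ^ 2
      = ∑ j ∈ range (2 * m), squareCoeff (nfF k m a) (2 * m) s j • nfD k m a j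
        + (∑ j ∈ Ico (2 * m) (2 * (2 * m)),
            squareCoeff (nfF k m a) (2 * m) s j * (nfF k m a).coeff (j + 1)) • 1 := by
  have htail : ∑ j ∈ Ico (2 * m) (2 * (2 * m)),
        C (squareCoeff (nfF k m a) (2 * m) s j) * divX^[j + 1] (nfF k m a)
      = C (∑ j ∈ Ico (2 * m) (2 * (2 * m)),
            squareCoeff (nfF k m a) (2 * m) s j * (nfF k m a).coeff (j + 1)) := by
    rw [map_sum]
    refine sum_congr rfl fun j hj => ?_
    rw [mem_Ico] at hj
    rw [divX_iterate_eq_C_coeff ((natDegree_nfF_le m a).trans (by omega)), C_mul]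
  rw [sum_smul_nfD, sum_smul_nfD, ← map_pow, sq_sum_C_mul_divX_iterate,
    ← sum_range_add_sum_Ico _ (show 2 * m ≤ 2 * (2 * m) by omega), htail,
    ← map_one (Ideal.Quotient.mk _), smul_mk_eq_mk_C_mul, mul_one, map_add, map_add, map_mul,
    Ideal.Quotient.mk_singleton_self, zero_mul, zero_add]

theorem squareCoeff_nfF {p e e' : ℕ} (hp : p < m) (he : e + e' = 1) (s : ℕ → k) :
    squareCoeff (nfF k m a) (2 * m) s (2 * p + e)
      = ∑ κ : Fin (m + 1), a (2 * κ + e') * s (p + κ) ^ 2 := by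
  have hfilter : (range (2 * m)).filter (fun i => 2 * p + e ≤ 2 * i + 1) = Ico p (2 * m) := by
    ext i
    simp only [mem_filter, mem_range, mem_Ico]
    omega
  rw [squareCoeff, hfilter, sum_Ico_eq_sum_range, Fin.sum_univ_eq_sum_range
    (fun κ => a (2 * κ + e') * s (p + κ) ^ 2)]
  rw [← sum_subset (range_subset_range.2 (show m + 1 ≤ 2 * m - p by omega))]
  · refine sum_congr rfl fun κ hκ => ?_
    rw [mem_range] at hκ
    rw [coeff_nfF, if_pos (by omega), show 2 * (p + κ) + 1 - (2 * p + e) = 2 * κ + e' by omega]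
  · intro κ _ hκ
    rw [mem_range] at hκ
    rw [coeff_nfF, if_neg (by omega), zero_mul]

theorem nfQ0_nfG [CharP k 2] (r s : ℕ → k) (z : (Fin (m + 1) → k) × (Fin m → k)) :
    nfQ0 k m a r (nfG k m s z)
      = nfQ0 k m a (fun j => r j + s j + squareCoeff (nfF k m a) (2 * m) s j) z := by
  change kroneckerForm _ Fin.succ (fun i : Fin m => r (2 * i + 1)) _ = kroneckerForm _ _ _ _
  rw [kroneckerForm_nfG _ _ (e := 1) Fin.val_succ]
  congr 2 with i
  simpa using (squareCoeff_nfF m a i.isLt (add_zero 1) s).symm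

theorem nfQ1_nfG [CharP k 2] (r s : ℕ → k) (z : (Fin (m + 1) → k) × (Fin m → k)) :
    nfQ1 k m a r (nfG k m s z)
      = nfQ1 k m a (fun j => r j + s j + squareCoeff (nfF k m a) (2 * m) s j) z := by
  change kroneckerForm _ Fin.castSucc (fun i : Fin m => r (2 * i)) _ = kroneckerForm _ _ _ _
  rw [kroneckerForm_nfG _ _ (e := 0) Fin.val_castSucc]
  congr 2 with i
  simpa using (squareCoeff_nfF m a i.isLt (zero_add 1) s).symm

end NormalForm

theorem normal_form_artin_schreier_transformation_general
    (k : Type*) [Field k] [CharP k 2] (m : ℕ) (a r s : ℕ → k) :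
    ∃ (r' : ℕ → k) (c : k),
      (∀ z, nfQ0 k m a r (nfG k m s z) = nfQ0 k m a r' z) ∧
      (∀ z, nfQ1 k m a r (nfG k m s z) = nfQ1 k m a r' z) ∧
      ∑ i ∈ range (2 * m), r' i • nfD k m a i
        = ∑ i ∈ range (2 * m), r i • nfD k m a i
          + (∑ i ∈ range (2 * m), s i • nfD k m a i) ^ 2
          + (∑ i ∈ range (2 * m), s i • nfD k m a i)
          + c • (1 : k[X] ⧸ Ideal.span {nfF k m a}) := by
  refine ⟨fun j => r j + s j + squareCoeff (nfF k m a) (2 * m) s j,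
    -∑ j ∈ Ico (2 * m) (2 * (2 * m)),
      squareCoeff (nfF k m a) (2 * m) s j * (nfF k m a).coeff (j + 1),
    nfQ0_nfG m a r s, nfQ1_nfG m a r s, ?_⟩
  simp only [add_smul, sum_add_distrib, sq_sum_smul_nfD, neg_smul]
  abel

/-- Transformation of the normal form under an automorphism of the associated pair of
bilinear forms: if `(q₀, q₁)` is a regular pair in Kronecker normal form with parameters
`r`, and `g` is the automorphism with parameters `s`, then `(q₀ ∘ g, q₁ ∘ g)` is again in
normal form with parameters `r'` satisfying `r' ≡ r + s² + s mod k` in `A = k[T]/(f)`,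
where `r = ∑ rᵢ dᵢ`, `s = ∑ sᵢ dᵢ`, `r' = ∑ r'ᵢ dᵢ`. -/
theorem normal_form_artin_schreier_transformation
    (k : Type*) [Field k] [CharP k 2] (m : ℕ) (a r s : ℕ → k)
    (hsep : (nfF k m a).Separable) (han : a (2 * m + 1) ≠ 0) :
    ∃ (r' : ℕ → k) (c : k),
      (∀ z, nfQ0 k m a r (nfG k m s z) = nfQ0 k m a r' z) ∧
      (∀ z, nfQ1 k m a r (nfG k m s z) = nfQ1 k m a r' z) ∧
      ∑ i ∈ range (2 * m), r' i • nfD k m a i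
        = ∑ i ∈ range (2 * m), r i • nfD k m a i
          + (∑ i ∈ range (2 * m), s i • nfD k m a i) ^ 2
          + (∑ i ∈ range (2 * m), s i • nfD k m a i)
          + c • (1 : k[X] ⧸ Ideal.span {nfF k m a}) :=
  normal_form_artin_schreier_transformation_general k m a r s
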